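/- Let j ≥ 1 and let G be a graph whose vertex set partitions into D = {a,b,c,d,e} and a nonempty set R with |R| = j such that: the edges inside D are exactly ab, ac, ad, cd, be (so D induces the graph F_5); every vertex of R is adjacent to a and to b and to no other vertex of D; and the edges inside R are arbitrary. Then G is not L-integral. -/

import Mathlib

open SimpleGraph Polynomial

/-- A finite simple graph is `L`-integral if every eigenvalue of its Laplacian
matrix (over `ℝ`) is an integer. -/
def LIntegral {V : Type*} [Fintype V] [DecidableEq V] (G : SimpleGraph V)
    [DecidableRel G.Adj] : Prop :=
  ∀ μ ∈ spectrum ℝ (G.lapMatrix ℝ), ∃ z : ℤ, μ = (z : ℝ)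

/-- The graph obtained from `F₅` (vertices `a,b,c,d,e = 0,1,2,3,4`, edges
`ab, ac, ad, cd, be`) by adding a nonempty set `R` of vertices, each adjacent
exactly to the midpoints `a` and `b`, with the edges inside `R` given by `H`. -/
def F5Ext (j : ℕ) (H : SimpleGraph (Fin j)) : SimpleGraph (Fin 5 ⊕ Fin j) :=
  SimpleGraph.fromRel (fun u v =>
    (u = Sum.inl 0 ∧ v = Sum.inl 1) ∨ (u = Sum.inl 0 ∧ v = Sum.inl 2) ∨
    (u = Sum.inl 0 ∧ v = Sum.inl 3) ∨ (u = Sum.inl 2 ∧ v = Sum.inl 3) ∨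
    (u = Sum.inl 1 ∧ v = Sum.inl 4) ∨
    (∃ r : Fin j, (u = Sum.inl 0 ∨ u = Sum.inl 1) ∧ v = Sum.inr r) ∨
    (∃ r s : Fin j, H.Adj r s ∧ u = Sum.inr r ∧ v = Sum.inr s))

open Matrix Finset in
/-- Laplacian `mulVec` as a sum of differences over (indicator of) neighbours. -/
lemma lapMatrix_mulVec_eq_sum_ite {W : Type*} [Fintype W] [DecidableEq W]
    (G : SimpleGraph W) [DecidableRel G.Adj] (w : W → ℝ) (x : W) :
    (G.lapMatrix ℝ *ᵥ w) x = ∑ y, if G.Adj x y then w x - w y else 0 := by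
  have h1 : (∑ y, if G.Adj x y then w x - w y else 0)
      = ∑ y ∈ G.neighborFinset x, (w x - w y) := by
    rw [SimpleGraph.neighborFinset_eq_filter, Finset.sum_filter]
  rw [SimpleGraph.lapMatrix_mulVec_apply, h1, Finset.sum_sub_distrib, Finset.sum_const,
    nsmul_eq_mul]
  rfl

/-- The characteristic polynomial (as a function) of the quotient matrix. -/
def qpoly (j : ℕ) (x : ℝ) : ℝ :=
  x^5 - (9+2*(j:ℝ))*x^4 + (27+11*(j:ℝ)+(j:ℝ)^2)*x^3
    - (31+16*(j:ℝ)+2*(j:ℝ)^2)*x^2 + (10+7*(j:ℝ)+(j:ℝ)^2)*x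

lemma qpoly_has_root (j : ℕ) (hj : 1 ≤ j) :
    ∃ μ : ℝ, 1 < μ ∧ μ < 2 ∧ qpoly j μ = 0 := by
  have hcont : Continuous (qpoly j) := by unfold qpoly; continuity
  have hj1 : (1:ℝ) ≤ (j:ℝ) := by exact_mod_cast hj
  have h1 : qpoly j 1 = -2 := by unfold qpoly; ring
  have h2 : qpoly j 2 = 6*(j:ℝ) + 2*(j:ℝ)^2 := by unfold qpoly; ring
  have hmem : (0:ℝ) ∈ Set.Ioo (qpoly j 1) (qpoly j 2) := by
    constructor
    · rw [h1]; norm_num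
    · rw [h2]; nlinarith
  obtain ⟨μ, hμ, hval⟩ :=
    intermediate_value_Ioo (by norm_num : (1:ℝ) ≤ 2) hcont.continuousOn hmem
  exact ⟨μ, hμ.1, hμ.2, hval⟩

open Matrix in
/-- A graph consisting of `F₅` together with a nonempty set of extra vertices, each
adjacent exactly to the two midpoints of `F₅`, is not `L`-integral. -/
theorem F5Ext_not_LIntegral {V : Type*} [Fintype V] [DecidableEq V]
    (G : SimpleGraph V) [DecidableRel G.Adj] (j : ℕ) (hj : 1 ≤ j)
    (H : SimpleGraph (Fin j)) (h : Nonempty (G ≃g F5Ext j H)) :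
    ¬ LIntegral G := by
  classical
  obtain ⟨e⟩ := h
  obtain ⟨t, ht1, ht2, hp⟩ := qpoly_has_root j hj
  have hJ0 : (0:ℝ) ≤ (j:ℝ) := Nat.cast_nonneg j
  have hne1 : (1:ℝ) - t ≠ 0 := by linarith
  have hne2 : (2:ℝ) - t ≠ 0 := by linarith
  have hne3 : (2:ℝ) - t + (j:ℝ) ≠ 0 := by linarith
  -- the eigenvector data
  set α : ℝ := (((2+(j:ℝ)-t)*(1-t)-1)*(2-t) - (j:ℝ)*(1-t)) / (2-t+(j:ℝ)) with hα
  set β : ℝ := 1 - t with hβ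
  set γ : ℝ := α / (1-t) with hγ
  set ρ : ℝ := (α + β)/(2-t) with hρ
  have hγ' : α = (1-t) * γ := by rw [hγ]; field_simp [show (1:ℝ) - t ≠ 0 by linarith]
  have hρ' : (2-t) * ρ = α + β := by rw [hρ]; field_simp
  have hα' : (2-t+(j:ℝ)) * α = ((2+(j:ℝ)-t)*(1-t)-1)*(2-t) - (j:ℝ)*(1-t) := by
    rw [hα]; field_simp; rw [hβ]
  -- the key compatibility equation (row a), follows from `qpoly j t = 0`
  have rowa : (3+(j:ℝ)-t)*α - β - 2*γ - (j:ℝ)*ρ = 0 := by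
    have hfac : ((3+(j:ℝ)-t)*α - β - 2*γ - (j:ℝ)*ρ) * ((1-t)*(2-t)*(2-t+(j:ℝ)))
        = (t-2) * qpoly j t := by
      rw [hγ, hρ, hα, hβ]
      field_simp [show (1:ℝ) - t ≠ 0 by linarith]
      unfold qpoly
      ring
    rw [hp, mul_zero] at hfac
    rcases mul_eq_zero.mp hfac with h' | h'
    · exact h'
    · exact absurd h' (mul_ne_zero (mul_ne_zero hne1 hne2) hne3)
  -- row b holds by the construction of `α`
  have rowb : β - α + (β - 1) + (j:ℝ)*(β - ρ) - t*β = 0 := by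
    rw [hρ, hα, hβ]
    field_simp
    ring
  clear_value α β γ ρ
  -- the eigenvector on `F5Ext`
  set w : (Fin 5 ⊕ Fin j) → ℝ := Sum.elim ![α, β, γ, γ, 1] (fun _ => ρ) with hw
  have key : ∀ x, (∑ y, if (F5Ext j H).Adj x y then w x - w y else 0) = t * w x := by
    rintro (i | r)
    · fin_cases i
      · -- vertex a = inl 0
        rw [Fintype.sum_sum_type]
        simp only [F5Ext, SimpleGraph.fromRel_adj, hw, Fin.sum_univ_five]
        simp
        linear_combination rowa
      · -- vertex b = inl 1
        rw [Fintype.sum_sum_type]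
        simp only [F5Ext, SimpleGraph.fromRel_adj, hw, Fin.sum_univ_five]
        simp
        linear_combination rowb
      · -- vertex c = inl 2
        rw [Fintype.sum_sum_type]
        simp only [F5Ext, SimpleGraph.fromRel_adj, hw, Fin.sum_univ_five]
        simp
        linear_combination -hγ'
      · -- vertex d = inl 3
        rw [Fintype.sum_sum_type]
        simp only [F5Ext, SimpleGraph.fromRel_adj, hw, Fin.sum_univ_five]
        simp
        linear_combination -hγ'
      · -- vertex e = inl 4
        rw [Fintype.sum_sum_type]
        simp only [F5Ext, SimpleGraph.fromRel_adj, hw, Fin.sum_univ_five]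
        simp
        rw [hβ]; ring
    · rw [Fintype.sum_sum_type]
      simp only [F5Ext, SimpleGraph.fromRel_adj, hw, Fin.sum_univ_five]
      simp
      linear_combination hρ'
  -- transport the eigenvector to `G`
  set w' : V → ℝ := w ∘ ⇑e with hw'
  have keyG : ∀ x, (G.lapMatrix ℝ *ᵥ w') x = t * w' x := by
    intro x
    rw [lapMatrix_mulVec_eq_sum_ite]
    simp only [hw', Function.comp_apply]
    rw [← key (e x)]
    refine Fintype.sum_equiv e.toEquiv _ _ fun y => ?_
    simp only [RelIso.coe_fn_toEquiv]
    exact if_congr (e.map_adj_iff).symm rfl rfl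
  have hvec : (t • (1 : Matrix V V ℝ) - G.lapMatrix ℝ) *ᵥ w' = 0 := by
    ext x
    simp only [Matrix.sub_mulVec, Matrix.smul_mulVec, Matrix.one_mulVec,
      Pi.sub_apply, Pi.smul_apply, Pi.zero_apply, smul_eq_mul, keyG x]
    ring
  have hwne : w' ≠ 0 := by
    intro h0
    have h14 : w' (e.symm (Sum.inl 4)) = 1 := by
      simp only [hw', Function.comp_apply, RelIso.apply_symm_apply, hw]
      simp
    rw [h0] at h14
    simp at h14
  have hdet : (t • (1 : Matrix V V ℝ) - G.lapMatrix ℝ).det = 0 := by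
    rw [← Matrix.exists_mulVec_eq_zero_iff]
    exact ⟨w', hwne, hvec⟩
  have hspec : t ∈ spectrum ℝ (G.lapMatrix ℝ) := by
    rw [spectrum.mem_iff]
    intro hu
    rw [Matrix.isUnit_iff_isUnit_det, Algebra.algebraMap_eq_smul_one, hdet] at hu
    exact hu.ne_zero rfl
  intro hint
  obtain ⟨z, hz⟩ := hint t hspec
  rw [hz] at ht1 ht2
  have h1' : (1:ℤ) < z := by exact_mod_cast ht1
  have h2' : z < 2 := by exact_mod_cast ht2
  omega
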